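/- Let f : ℝᵈ → ℝ be differentiable with L-Lipschitz gradient, h : ℝᵈ → ℝ convex, Φ = f + h, η > 0, and v ∈ ℝᵈ. Let x⁺ = prox_{ηh}(x - ηv) and x̄ = prox_{ηh}(x - η∇f(x)). Then Φ(x⁺) ≤ Φ(x) - (5/(8η) - L/2)‖x⁺ - x‖² - (1/(3η) - L)‖x̄ - x‖² + η‖∇f(x) - v‖². -/

import Mathlib

open scoped RealInnerProductSpace
open Set Filter Topology InnerProductSpace

/-!
The two-sided smoothness bound `|f y - f x - ⟪∇f x, y - x⟫| ≤ L/2 ‖y - x‖²` and the variational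
inequality of a proximal point give, with `g = ∇f x`, the sufficient decrease
`Φ x̄ ≤ Φ x - (1/η - L/2) ‖x̄ - x‖²` and the comparison
`Φ x⁺ ≤ Φ x̄ + ⟪g - v, x⁺ - x̄⟫ - η⁻¹ ⟪x⁺ - x, x⁺ - x̄⟫ + L/2 (‖x⁺ - x‖² + ‖x̄ - x‖²)`.
Polarizing the last inner product and using `‖x⁺ - x‖² ≤ 4/3 ‖x̄ - x‖² + 4 ‖x⁺ - x̄‖²` turns the
`‖x⁺ - x̄‖²` term into the stated coefficients, while firm nonexpansiveness of the proximal map,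
`‖x⁺ - x̄‖² ≤ η ⟪g - v, x⁺ - x̄⟫`, bounds the error term by `η ‖g - v‖²`.
-/

theorem abs_sub_sub_fderiv_le_of_lipschitz {E : Type*} [NormedAddCommGroup E] [NormedSpace ℝ E]
    {f : E → ℝ} {f' : E → E →L[ℝ] ℝ} {L : ℝ} (hf : ∀ x, HasFDerivAt f (f' x) x)
    (hL : ∀ x y, ‖f' x - f' y‖ ≤ L * ‖x - y‖) (x y : E) :
    |f y - f x - f' x (y - x)| ≤ L / 2 * ‖y - x‖ ^ 2 := by
  set u := y - x
  have hderiv (t : ℝ) : HasDerivAt (fun t => f (x + t • u) - f x - t * f' x u)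
      (f' (x + t • u) u - f' x u) t := by
    have hline : HasDerivAt (fun t : ℝ => x + t • u) u t := by
      simpa using ((hasDerivAt_id t).smul_const u).const_add x
    exact (((hf _).comp_hasDerivAt t hline).sub_const (f x)).sub (hasDerivAt_mul_const _)
  have hbound (t : ℝ) : HasDerivAt (fun t => L / 2 * ‖u‖ ^ 2 * t ^ 2) (L * ‖u‖ ^ 2 * t) t :=
    ((hasDerivAt_pow 2 t).const_mul _).congr_deriv (by push_cast; ring)
  have hfence := image_norm_le_of_norm_deriv_right_le_deriv_boundary
    (fun t _ => (hderiv t).continuousAt.continuousWithinAt) (fun t _ => (hderiv t).hasDerivWithinAt)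
    (by simp) hbound ?_ (right_mem_Icc.2 zero_le_one)
  · simpa [u] using hfence
  · rintro t ⟨ht, -⟩
    calc ‖f' (x + t • u) u - f' x u‖ = ‖(f' (x + t • u) - f' x) u‖ := rfl
      _ ≤ ‖f' (x + t • u) - f' x‖ * ‖u‖ := ContinuousLinearMap.le_opNorm _ _
      _ ≤ L * ‖t • u‖ * ‖u‖ := by gcongr; simpa using hL (x + t • u) x
      _ = L * ‖u‖ ^ 2 * t := by rw [norm_smul, Real.norm_of_nonneg ht]; ring

section InnerProductSpace

variable {E : Type*} [NormedAddCommGroup E] [InnerProductSpace ℝ E]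

theorem abs_sub_sub_inner_le_of_lipschitz_gradient [CompleteSpace E] {f : E → ℝ} {f' : E → E}
    {L : ℝ} (hf : ∀ x, HasGradientAt f (f' x) x) (hL : ∀ x y, ‖f' x - f' y‖ ≤ L * ‖x - y‖)
    (x y : E) : |f y - f x - ⟪f' x, y - x⟫| ≤ L / 2 * ‖y - x‖ ^ 2 := by
  have hL' (x y : E) : ‖toDual ℝ E (f' x) - toDual ℝ E (f' y)‖ ≤ L * ‖x - y‖ := by
    rw [← map_sub, LinearIsometryEquiv.norm_map]
    exact hL x y
  simpa using abs_sub_sub_fderiv_le_of_lipschitz (fun x => (hf x).hasFDerivAt) hL' x y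

theorem sub_le_inner_add_of_lipschitz_gradient [CompleteSpace E] {f : E → ℝ} {f' : E → E}
    {L : ℝ} (hf : ∀ x, HasGradientAt f (f' x) x) (hL : ∀ x y, ‖f' x - f' y‖ ≤ L * ‖x - y‖)
    (x y z : E) : f y - f z ≤ ⟪f' x, y - z⟫ + L / 2 * (‖y - x‖ ^ 2 + ‖z - x‖ ^ 2) := by
  have hy := (abs_le.1 (abs_sub_sub_inner_le_of_lipschitz_gradient hf hL x y)).2
  have hz := (abs_le.1 (abs_sub_sub_inner_le_of_lipschitz_gradient hf hL x z)).1
  rw [← sub_sub_sub_cancel_right y z x, inner_sub_right]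
  linarith

def IsProxPoint (h : E → ℝ) (η : ℝ) (z w : E) : Prop :=
  ∀ y, h w + 1 / (2 * η) * ‖w - z‖ ^ 2 ≤ h y + 1 / (2 * η) * ‖y - z‖ ^ 2

namespace IsProxPoint

variable {h : E → ℝ} {η : ℝ} {z w : E}

theorem inner_le (hh : ConvexOn ℝ univ h) (hη : 0 < η) (hw : IsProxPoint h η z w) (y : E) :
    ⟪z - w, y - w⟫ ≤ η * (h y - h w) := by
  -- Test minimality against `w + θ • (y - w)` and let `θ → 0⁺`.
  have hθ : ∀ θ ∈ Ioc (0 : ℝ) 1, ⟪z - w, y - w⟫ ≤ η * (h y - h w) + θ / 2 * ‖y - w‖ ^ 2 := by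
    rintro θ ⟨hθ0, hθ1⟩
    have hconv : h ((1 - θ) • w + θ • y) ≤ (1 - θ) * h w + θ * h y :=
      hh.2 (mem_univ w) (mem_univ y) (by linarith) hθ0.le (by ring)
    have hexpand : ‖(1 - θ) • w + θ • y - z‖ ^ 2
        = ‖w - z‖ ^ 2 - 2 * θ * ⟪z - w, y - w⟫ + θ ^ 2 * ‖y - w‖ ^ 2 := by
      rw [show (1 - θ) • w + θ • y - z = θ • (y - w) - (z - w) by module, norm_sub_sq_real,
        norm_smul, real_inner_smul_left, Real.norm_of_nonneg hθ0.le, real_inner_comm, norm_sub_rev z]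
      ring
    have hmin := hw ((1 - θ) • w + θ • y)
    rw [hexpand] at hmin
    refine le_of_mul_le_mul_left ?_ hθ0
    have hmin' := hmin.trans (add_le_add_left hconv _)
    field_simp at hmin'
    linarith
  have hlim : Tendsto (fun θ : ℝ => η * (h y - h w) + θ / 2 * ‖y - w‖ ^ 2) (𝓝[>] 0)
      (𝓝 (η * (h y - h w))) := by
    have hcont : Continuous (fun θ : ℝ => η * (h y - h w) + θ / 2 * ‖y - w‖ ^ 2) := by fun_prop
    simpa using (hcont.tendsto 0).mono_left nhdsWithin_le_nhds
  exact ge_of_tendsto hlim (eventually_of_mem (Ioc_mem_nhdsGT one_pos) hθ)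

theorem norm_sub_sq_le_inner (hh : ConvexOn ℝ univ h) (hη : 0 < η) {z' w' : E}
    (hw : IsProxPoint h η z w) (hw' : IsProxPoint h η z' w') :
    ‖w - w'‖ ^ 2 ≤ ⟪z - z', w - w'⟫ := by
  have h₁ := hw.inner_le hh hη w'
  have h₂ := hw'.inner_le hh hη w
  have hsum : ⟪z - w, w' - w⟫ + ⟪z' - w', w - w'⟫ = ‖w - w'‖ ^ 2 - ⟪z - z', w - w'⟫ := by
    rw [← inner_neg_neg (z - w), neg_sub, neg_sub, ← inner_add_left, ← real_inner_self_eq_norm_sq,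
      ← inner_sub_left]
    congr 1
    abel
  linarith

theorem le_add_inner (hh : ConvexOn ℝ univ h) (hη : 0 < η) {x g : E}
    (hw : IsProxPoint h η (x - η • g) w) (y : E) :
    h w ≤ h y + ⟪g, y - w⟫ + η⁻¹ * ⟪w - x, y - w⟫ := by
  have hvi := hw.inner_le hh hη y
  rw [show x - η • g - w = -(w - x) - η • g by abel, inner_sub_left, inner_neg_left,
    real_inner_smul_left] at hvi
  field_simp
  linarith

theorem add_le_sub_mul_norm_sq (hh : ConvexOn ℝ univ h) (hη : 0 < η) {f : E → ℝ} {x g : E}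
    {L : ℝ} (hw : IsProxPoint h η (x - η • g) w)
    (hf : f w - f x - ⟪g, w - x⟫ ≤ L / 2 * ‖w - x‖ ^ 2) :
    f w + h w ≤ f x + h x - (η⁻¹ - L / 2) * ‖w - x‖ ^ 2 := by
  have hprox := hw.le_add_inner hh hη x
  rw [← neg_sub w x] at hprox
  simp only [inner_neg_right, real_inner_self_eq_norm_sq] at hprox
  linarith

end IsProxPoint

theorem real_inner_le_mul_norm_sq_of_norm_sq_le {a b : E} {η : ℝ} (hη : 0 < η)
    (h : ‖b‖ ^ 2 ≤ η * ⟪a, b⟫) : ⟪a, b⟫ ≤ η * ‖a‖ ^ 2 := by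
  have := norm_sub_sq_real (η • a) b
  rw [norm_smul, real_inner_smul_left, Real.norm_of_nonneg hη.le] at this
  nlinarith [sq_nonneg ‖η • a - b‖]

end InnerProductSpace

theorem inexact_prox_descent {d : ℕ}
    (f h : EuclideanSpace ℝ (Fin d) → ℝ)
    (f' : EuclideanSpace ℝ (Fin d) → EuclideanSpace ℝ (Fin d)) (L : ℝ)
    (hdiff : ∀ x, HasGradientAt f (f' x) x)
    (hLip : ∀ x y, ‖f' x - f' y‖ ≤ L * ‖x - y‖)
    (hconv : ConvexOn ℝ Set.univ h)
    (η : ℝ) (hη : 0 < η) (x v xplus xbar : EuclideanSpace ℝ (Fin d))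
    (hminv : ∀ y : EuclideanSpace ℝ (Fin d),
      h xplus + (1 / (2 * η)) * ‖xplus - (x - η • v)‖ ^ 2 ≤
        h y + (1 / (2 * η)) * ‖y - (x - η • v)‖ ^ 2)
    (hminw : ∀ y : EuclideanSpace ℝ (Fin d),
      h xbar + (1 / (2 * η)) * ‖xbar - (x - η • f' x)‖ ^ 2 ≤
        h y + (1 / (2 * η)) * ‖y - (x - η • f' x)‖ ^ 2) :
    f xplus + h xplus ≤ f x + h x
      - (5 / (8 * η) - L / 2) * ‖xplus - x‖ ^ 2
      - (1 / (3 * η) - L) * ‖xbar - x‖ ^ 2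
      + η * ‖f' x - v‖ ^ 2 := by
  have hplus : IsProxPoint h η (x - η • v) xplus := hminv
  have hbar : IsProxPoint h η (x - η • f' x) xbar := hminw
  have hdecrease := hbar.add_le_sub_mul_norm_sq hconv hη
    (abs_le.1 (abs_sub_sub_inner_le_of_lipschitz_gradient hdiff hLip x xbar)).2
  have hkey : f xplus + h xplus ≤ f xbar + h xbar + ⟪f' x - v, xplus - xbar⟫
      - η⁻¹ * ⟪xplus - x, xplus - xbar⟫ + L / 2 * (‖xplus - x‖ ^ 2 + ‖xbar - x‖ ^ 2) := by
    have hf := sub_le_inner_add_of_lipschitz_gradient hdiff hLip x xplus xbar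
    have hprox := hplus.le_add_inner hconv hη xbar
    rw [← neg_sub xplus xbar, inner_neg_right, inner_neg_right] at hprox
    rw [inner_sub_left]
    linarith
  have hpolar : 2 * ⟪xplus - x, xplus - xbar⟫
      = ‖xplus - x‖ ^ 2 + ‖xplus - xbar‖ ^ 2 - ‖xbar - x‖ ^ 2 := by
    have := norm_sub_sq_real (xplus - x) (xplus - xbar)
    rw [sub_sub_sub_cancel_left] at this
    linarith
  have hyoung : ‖xplus - x‖ ^ 2 ≤ 4 / 3 * ‖xbar - x‖ ^ 2 + 4 * ‖xplus - xbar‖ ^ 2 := by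
    have : ‖xplus - x‖ ≤ ‖xplus - xbar‖ + ‖xbar - x‖ := norm_sub_le_norm_sub_add_norm_sub _ _ _
    nlinarith [norm_nonneg (xplus - x), sq_nonneg (‖xbar - x‖ - 3 * ‖xplus - xbar‖)]
  have herror : ⟪f' x - v, xplus - xbar⟫ ≤ η * ‖f' x - v‖ ^ 2 := by
    refine real_inner_le_mul_norm_sq_of_norm_sq_le hη ?_
    have := hplus.norm_sub_sq_le_inner hconv hη hbar
    rwa [sub_sub_sub_cancel_left, ← smul_sub, real_inner_smul_left] at this
  linear_combination hkey + hdecrease + herror - η⁻¹ / 2 * hpolar + η⁻¹ / 8 * hyoung
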